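/- arXiv:1211.5833 — 6 statements merged into one kernel-verified Lean document; each statement's English description precedes it below -/
import Mathlib

section
/- Let p be a prime and d ≥ 1 an integer. Suppose X is a topological abelian group together with a short exact sequence 0 → ℤ_p^d → X → ℤ/pℤ → 0 of abelian groups, in which the map i : ℤ_p^d → X is a continuous group homomorphism that is a homeomorphism onto its image, and the map f : X → ℤ/pℤ is a continuous surjective group homomorphism whose kernel equals the image of i (where ℤ/pℤ carries the discrete topology). Then X is topologically isomorphic either to ℤ_p^d or to ℤ_p^d × ℤ/pℤ (the latter with the product topology, ℤ/pℤ discrete). -/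
/-!
The subgroup `i(ℤ_p^d)` is the kernel of `f`, hence compact and clopen of index `p`, so `X` is
compact Hausdorff and continuous injective homomorphisms out of it, or into it from compact
groups, are closed embeddings. Pick `x` with `f x = 1` and write `p • x = i a`.
If `a = p • b`, then `x - i b` has order `p` and splits the sequence: `X ≅ ℤ_p^d × ℤ/p`.
Otherwise some coordinate `a j` is a unit; then `X` has no `p`-torsion, and `y ↦ i⁻¹ (p • y)`
embeds `X` onto `p ℤ_p^d + ℤ_p a`, which is also the image of the injective linear map sending
`e_j ↦ a` and `e_k ↦ p e_k` for `k ≠ j`. Hence `X ≅ ℤ_p^d`.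
-/

open Topology Function

section TopologicalGroup

variable {X : Type*} [AddGroup X] [TopologicalSpace X]

theorem AddMonoidHom.nonempty_continuousAddEquiv_of_range_eq {A G : Type*} [AddGroup A]
    [AddGroup G] [TopologicalSpace A] [TopologicalSpace G] (χ : X →+ G) (T : A →+ G)
    (hχ : IsEmbedding χ) (hT : IsEmbedding T) (h : χ.range = T.range) :
    Nonempty (X ≃ₜ+ A) := by
  let e : X ≃+ A := (AddMonoidHom.ofInjective hχ.injective).trans
    ((AddEquiv.addSubgroupCongr h).trans (AddMonoidHom.ofInjective hT.injective).symm)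
  have hTe : ∀ y, T (e y) = χ y := fun y => by
    simp [e, AddMonoidHom.apply_ofInjective_symm, AddMonoidHom.ofInjective_apply]
  have hχe : ∀ w, χ (e.symm w) = T w := fun w => by
    rw [← hTe, e.apply_symm_apply]
  exact ⟨{ e with
    continuous_toFun := hT.continuous_iff.mpr <| by
      simpa [comp_def, hTe] using hχ.continuous
    continuous_invFun := hχ.continuous_iff.mpr <| by
      simpa [comp_def, hχe] using hT.continuous }⟩

theorem compactSpace_of_isCompact_ker [ContinuousAdd X] {Q : Type*} [AddGroup Q] [Finite Q]
    (f : X →+ Q) (hK : IsCompact (f.ker : Set X)) : CompactSpace X := by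
  let rep : Q → X := invFun f
  have hS : IsCompact (Set.range fun y => rep (f y)) :=
    ((Set.finite_range rep).subset (Set.range_comp_subset_range f rep)).isCompact
  refine ⟨(hK.add hS).of_isClosed_subset isClosed_univ fun y _ => ?_⟩
  have hy : f (rep (f y)) = f y := invFun_eq ⟨y, rfl⟩
  exact ⟨y - rep (f y), by simp [hy], rep (f y), ⟨y, rfl⟩, sub_add_cancel y _⟩

theorem t2Space_of_isClosedEmbedding [IsTopologicalAddGroup X] {A : Type*} [AddGroup A]
    [TopologicalSpace A] [T1Space A] (i : A →+ X) (hi : IsClosedEmbedding i) : T2Space X := by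
  have : T1Space X := IsTopologicalAddGroup.t1Space X <| by
    simpa using hi.isClosedMap _ (isClosed_singleton (x := (0 : A)))
  infer_instance

end TopologicalGroup

section ReplaceAndScale

variable {R ι : Type*} [CommRing R] [DecidableEq ι]

/-- The linear map sending `Pi.single j 1` to `a` and `Pi.single k 1` to `c • Pi.single k 1`
for `k ≠ j`. -/
def replaceAndScale (c : R) (j : ι) (a : ι → R) : (ι → R) →ₗ[R] (ι → R) :=
  c • LinearMap.id + (LinearMap.proj j).smulRight (a - c • Pi.single j 1)

variable (c : R) (j : ι) (a : ι → R)

theorem replaceAndScale_apply (w : ι → R) :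
    replaceAndScale c j a w = c • w + w j • (a - c • Pi.single j 1) := rfl

theorem replaceAndScale_single (r : R) : replaceAndScale c j a (Pi.single j r) = r • a := by
  simp only [replaceAndScale_apply, Pi.single_eq_same, smul_sub, ← Pi.single_smul',
    smul_eq_mul, mul_one, mul_comm r c]
  abel

theorem replaceAndScale_of_apply_eq_zero {w : ι → R} (hw : w j = 0) :
    replaceAndScale c j a w = c • w := by
  simp [replaceAndScale_apply, hw]

theorem replaceAndScale_injective [IsDomain R] (hc : c ≠ 0) (ha : IsUnit (a j)) :
    Injective (replaceAndScale c j a) := by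
  rw [← LinearMap.ker_eq_bot, LinearMap.ker_eq_bot']
  intro w hw
  have hwj : w j = 0 := by
    have := congrFun hw j
    simp only [replaceAndScale_apply, Pi.add_apply, Pi.smul_apply, Pi.sub_apply,
      Pi.single_eq_same, smul_eq_mul, Pi.zero_apply] at this
    exact ha.mul_left_eq_zero.mp (by linear_combination this)
  rw [replaceAndScale_of_apply_eq_zero c j a hwj] at hw
  exact (smul_eq_zero.mp hw).resolve_left hc

theorem mem_range_replaceAndScale (ha : IsUnit (a j)) {v : ι → R} :
    v ∈ LinearMap.range (replaceAndScale c j a) ↔ ∃ u : ι → R, ∃ r : R, c • u + r • a = v := by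
  constructor
  · rintro ⟨w, rfl⟩
    refine ⟨w - Pi.single j (w j), w j, ?_⟩
    simp only [replaceAndScale_apply, smul_sub, ← Pi.single_smul', smul_eq_mul, mul_one,
      mul_comm (w j) c]
    abel
  · rintro ⟨u, r, rfl⟩
    obtain ⟨b, hb⟩ := ha.exists_right_inv
    let z := u - (u j * b) • a
    have hz : z j = 0 := by simp [z, mul_assoc, mul_comm b, hb]
    have hdecomp : c • u + r • a = c • z + (c * u j * b + r) • a := by
      simp only [z, smul_sub, add_smul, mul_assoc, ← smul_smul]
      abel
    rw [hdecomp, ← replaceAndScale_of_apply_eq_zero c j a hz, ← replaceAndScale_single]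
    exact add_mem (LinearMap.mem_range_self _ _) (LinearMap.mem_range_self _ _)

end ReplaceAndScale

namespace PadicInt

variable {p : ℕ} [Fact p.Prime]

theorem exists_natCast_add_mul (r : ℤ_[p]) : ∃ (n : ℕ) (s : ℤ_[p]), n + p * s = r := by
  obtain ⟨s, hs⟩ := Ideal.mem_span_singleton'.mp
    (maximalIdeal_eq_span_p (p := p) ▸ (zmodRepr_spec r).2)
  exact ⟨zmodRepr r, s, by linear_combination hs⟩

theorem exists_isUnit_apply_of_forall_nsmul_ne {ι : Type*} {a : ι → ℤ_[p]}
    (ha : ∀ b, p • b ≠ a) : ∃ j, IsUnit (a j) := by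
  by_contra! h
  choose b hb using fun j => (norm_lt_one_iff_dvd (a j)).mp (not_isUnit_iff.mp (h j))
  exact ha b (funext fun j => by simp [nsmul_eq_mul, hb j])

theorem mem_range_replaceAndScale_iff {ι : Type*} [DecidableEq ι] {j : ι} {a : ι → ℤ_[p]}
    (ha : IsUnit (a j)) {v : ι → ℤ_[p]} :
    v ∈ LinearMap.range (replaceAndScale (p : ℤ_[p]) j a) ↔
      ∃ u : ι → ℤ_[p], ∃ n : ℕ, p • u + n • a = v := by
  rw [mem_range_replaceAndScale _ _ _ ha]
  constructor
  · rintro ⟨u, r, rfl⟩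
    obtain ⟨n, s, rfl⟩ := exists_natCast_add_mul r
    refine ⟨u + s • a, n, ?_⟩
    simp only [smul_add, add_smul, ← Nat.cast_smul_eq_nsmul ℤ_[p], smul_smul]
    abel
  · rintro ⟨u, n, rfl⟩
    exact ⟨u, n, by simp only [Nat.cast_smul_eq_nsmul]⟩

end PadicInt

section Extension

variable {A X Q : Type*} [AddCommGroup A] [AddCommGroup X] [AddCommGroup Q]
  {i : A →+ X} {f : X →+ Q}

theorem bijective_coprod_of_exact (hi : Injective i) (hexact : Exact i f) {s : Q →+ X}
    (hs : ∀ q, f (s q) = q) : Bijective (i.coprod s) := by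
  refine ⟨(injective_iff_map_eq_zero _).mpr fun ⟨u, q⟩ h => ?_, fun y => ?_⟩
  · rw [AddMonoidHom.coprod_apply] at h
    have hq : q = 0 := by simpa [hexact.apply_apply_eq_zero, hs] using congrArg f h
    subst hq
    have hu : u = 0 := hi (by simpa using h)
    rw [hu, Prod.mk_zero_zero]
  · obtain ⟨u, hu⟩ := (hexact (y - s (f y))).mp (by simp [hs])
    exact ⟨(u, f y), by simp [hu]⟩

variable {p : ℕ} {f : X →+ ZMod p}

theorem Function.Exact.nsmul_mem_range (hexact : Exact i f) (y : X) : p • y ∈ Set.range i :=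
  (hexact _).mp (by simp [nsmul_eq_mul])

theorem exists_section_of_nsmul_eq_zero {x : X} (hx : f x = 1) (hpx : p • x = 0) :
    ∃ s : ZMod p →+ X, ∀ q, f (s q) = q := by
  refine ⟨ZMod.lift p ⟨zmultiplesHom X x, by simpa using hpx⟩, fun q => ?_⟩
  obtain ⟨m, rfl⟩ := ZMod.intCast_surjective q
  simp [ZMod.lift_coe, hx]

noncomputable def nsmulPreimage (hi : Injective i) (hexact : Exact i f) : X →+ A :=
  (AddMonoidHom.ofInjective hi).symm.toAddMonoidHom.comp
    ((nsmulAddMonoidHom p).codRestrict i.range hexact.nsmul_mem_range)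

variable (hi : Injective i) (hexact : Exact i f)

theorem apply_nsmulPreimage (y : X) : i (nsmulPreimage hi hexact y) = p • y := by
  simp only [nsmulPreimage, AddEquiv.toAddMonoidHom_eq_coe, AddMonoidHom.coe_comp,
    AddMonoidHom.coe_coe, comp_apply, AddMonoidHom.apply_ofInjective_symm]
  rfl

theorem nsmulPreimage_add_nsmul {x : X} {a : A} (ha : p • x = i a) (u : A) (n : ℕ) :
    nsmulPreimage hi hexact (i u + n • x) = p • u + n • a :=
  hi (by rw [apply_nsmulPreimage, smul_add, smul_comm, ha]; simp)

theorem mem_range_nsmulPreimage [NeZero p] {x : X} {a : A} (hx : f x = 1) (ha : p • x = i a)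
    {v : A} : v ∈ (nsmulPreimage hi hexact).range ↔ ∃ u : A, ∃ n : ℕ, p • u + n • a = v := by
  constructor
  · rintro ⟨y, rfl⟩
    obtain ⟨u, hu⟩ := (hexact (y - (f y).val • x)).mp (by simp [hx])
    exact ⟨u, (f y).val, by rw [← nsmulPreimage_add_nsmul hi hexact ha, hu, sub_add_cancel]⟩
  · rintro ⟨u, n, rfl⟩
    exact ⟨i u + n • x, nsmulPreimage_add_nsmul hi hexact ha u n⟩

theorem eq_zero_of_nsmul_eq_zero_of_forall_nsmul_ne [Fact p.Prime] [IsAddTorsionFree A]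
    (hi : Injective i) (hexact : Exact i f) {x : X} {a : A} (hx : f x = 1) (ha : p • x = i a)
    (hsplit : ∀ b, p • b ≠ a) {y : X} (hy : p • y = 0) : y = 0 := by
  have hp : p ≠ 0 := (Fact.out : p.Prime).ne_zero
  by_cases hfy : f y = 0
  · obtain ⟨u, rfl⟩ := (hexact y).mp hfy
    rw [← map_nsmul, ← map_zero i] at hy
    rw [(smul_eq_zero.mp (hi hy)).resolve_left hp, map_zero]
  · -- otherwise `y` generates `X / i(A)`, so `x` is a multiple of `y` plus some `i b`
    let k := (f y)⁻¹
    obtain ⟨b, hb⟩ := (hexact (x - k.val • y)).mp (by simp [hx, k, inv_mul_cancel₀ hfy])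
    refine absurd (hi ?_) (hsplit b)
    rw [map_nsmul, hb, smul_sub, ← ha, smul_comm, hy, smul_zero, sub_zero]

theorem injective_nsmulPreimage [Fact p.Prime] [IsAddTorsionFree A] {x : X} {a : A}
    (hx : f x = 1) (ha : p • x = i a) (hsplit : ∀ b, p • b ≠ a) :
    Injective (nsmulPreimage hi hexact) :=
  (injective_iff_map_eq_zero _).mpr fun y hy =>
    eq_zero_of_nsmul_eq_zero_of_forall_nsmul_ne hi hexact hx ha hsplit
      (by rw [← apply_nsmulPreimage hi hexact, hy, map_zero])

end Extension

section Classification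

variable {X : Type*} [AddCommGroup X] [TopologicalSpace X] [ContinuousAdd X]
  {p : ℕ} {f : X →+ ZMod p} {x : X}

theorem nonempty_continuousAddEquiv_prod_of_nsmul_eq_zero [T2Space X] [NeZero p] {A : Type*}
    [AddCommGroup A] [TopologicalSpace A] [CompactSpace A] {i : A →+ X} (hi : Continuous i)
    (hi_inj : Injective i) (hexact : Exact i f) (hx : f x = 1) (hpx : p • x = 0) :
    Nonempty (X ≃ₜ+ A × ZMod p) := by
  obtain ⟨s, hs⟩ := exists_section_of_nsmul_eq_zero hx hpx
  have hbij := bijective_coprod_of_exact hi_inj hexact hs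
  have hcont : Continuous (i.coprod s) :=
    (hi.comp continuous_fst).add ((continuous_of_discreteTopology (f := s)).comp continuous_snd)
  obtain ⟨e⟩ := (i.coprod s).nonempty_continuousAddEquiv_of_range_eq (AddMonoidHom.id X)
    (hcont.isClosedEmbedding hbij.injective).isEmbedding IsEmbedding.id <| by
      rw [AddMonoidHom.range_eq_top.mpr hbij.surjective,
        AddMonoidHom.range_eq_top.mpr surjective_id]
  exact ⟨e.symm⟩

theorem nonempty_continuousAddEquiv_pi_of_forall_nsmul_ne [CompactSpace X] [Fact p.Prime]
    {ι : Type*} [Fintype ι] [DecidableEq ι] {i : (ι → ℤ_[p]) →+ X} {a : ι → ℤ_[p]}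
    (hi : IsEmbedding i) (hexact : Exact i f) (hx : f x = 1) (ha : p • x = i a)
    (hsplit : ∀ b, p • b ≠ a) : Nonempty (X ≃ₜ+ (ι → ℤ_[p])) := by
  obtain ⟨j, hj⟩ := PadicInt.exists_isUnit_apply_of_forall_nsmul_ne hsplit
  let χ := nsmulPreimage hi.injective hexact
  let T := replaceAndScale (p : ℤ_[p]) j a
  have hχ_cont : Continuous χ := hi.continuous_iff.mpr <| by
    simpa [comp_def, χ, apply_nsmulPreimage] using continuous_nsmul p
  have hχ : IsEmbedding χ :=
    (hχ_cont.isClosedEmbedding (injective_nsmulPreimage _ hexact hx ha hsplit)).isEmbedding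
  have hT : IsEmbedding T := (T.continuous_on_pi.isClosedEmbedding <|
    replaceAndScale_injective _ j a (mod_cast (Fact.out : p.Prime).ne_zero) hj).isEmbedding
  exact χ.nonempty_continuousAddEquiv_of_range_eq T.toAddMonoidHom hχ hT <| AddSubgroup.ext fun v =>
    (mem_range_nsmulPreimage _ hexact hx ha).trans (PadicInt.mem_range_replaceAndScale_iff hj).symm

end Classification

theorem extension_of_padic_by_cyclic_general (p : ℕ) [Fact p.Prime] (d : ℕ)
    (X : Type) [AddCommGroup X] [TopologicalSpace X] [IsTopologicalAddGroup X]
    (i : (Fin d → ℤ_[p]) →+ X) (f : X →+ ZMod p)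
    (hi_emb : Topology.IsEmbedding i)
    (hf_cont : Continuous f) (hf_surj : Function.Surjective f)
    (hexact : ∀ x : X, f x = 0 ↔ x ∈ Set.range i) :
    (∃ e : X ≃+ (Fin d → ℤ_[p]), Continuous e ∧ Continuous e.symm) ∨
    (∃ e : X ≃+ (Fin d → ℤ_[p]) × ZMod p, Continuous e ∧ Continuous e.symm) := by
  have hrange : Set.range i = f ⁻¹' {0} := Set.ext fun y => (hexact y).symm
  have : CompactSpace X := compactSpace_of_isCompact_ker f <| by
    rw [AddMonoidHom.coe_ker, ← hrange]
    exact isCompact_range hi_emb.continuous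
  have : T2Space X := t2Space_of_isClosedEmbedding i
    ⟨hi_emb, hrange ▸ (isClosed_discrete _).preimage hf_cont⟩
  obtain ⟨x, hx⟩ := hf_surj 1
  obtain ⟨a, ha⟩ := Exact.nsmul_mem_range hexact x
  by_cases hsplit : ∃ b, p • b = a
  · obtain ⟨b, rfl⟩ := hsplit
    obtain ⟨e⟩ := nonempty_continuousAddEquiv_prod_of_nsmul_eq_zero hi_emb.continuous
      hi_emb.injective hexact (x := x - i b) (by simp [hx, Exact.apply_apply_eq_zero hexact])
      (by rw [smul_sub, ← map_nsmul, ha, sub_self])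
    exact .inr ⟨e.toAddEquiv, e.continuous, e.symm.continuous⟩
  · push Not at hsplit
    obtain ⟨e⟩ := nonempty_continuousAddEquiv_pi_of_forall_nsmul_ne hi_emb hexact hx ha.symm hsplit
    exact .inl ⟨e.toAddEquiv, e.continuous, e.symm.continuous⟩

/-- If `X` is a topological abelian group sitting in a short exact sequence
`0 → ℤ_p^d → X → ℤ/pℤ → 0` in which `i : ℤ_p^d → X` is a topological embedding and
`f : X → ℤ/pℤ` is continuous and surjective (`ℤ/pℤ` discrete) with kernel the image of `i`,
then `X` is topologically isomorphic either to `ℤ_p^d` or to `ℤ_p^d × ℤ/pℤ`. -/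
theorem extension_of_padic_by_cyclic (p : ℕ) [Fact p.Prime] (d : ℕ) (hd : 1 ≤ d)
    (X : Type) [AddCommGroup X] [TopologicalSpace X] [IsTopologicalAddGroup X]
    (i : (Fin d → ℤ_[p]) →+ X) (f : X →+ ZMod p)
    (hi_emb : Topology.IsEmbedding i) (hi_inj : Function.Injective i)
    (hf_cont : Continuous f) (hf_surj : Function.Surjective f)
    (hexact : ∀ x : X, f x = 0 ↔ x ∈ Set.range i) :
    (∃ e : X ≃+ (Fin d → ℤ_[p]), Continuous e ∧ Continuous e.symm) ∨
    (∃ e : X ≃+ (Fin d → ℤ_[p]) × ZMod p, Continuous e ∧ Continuous e.symm) :=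
  extension_of_padic_by_cyclic_general p d X i f hi_emb hf_cont hf_surj hexact
end

section
/- Let p be a prime, d ≥ 1 and n ≥ 1 integers. Let M₁ be a topological abelian group and M₁ ⊇ M₂ ⊇ ⋯ ⊇ Mₙ a chain of subgroups, each carrying the subspace topology, such that for every 1 ≤ i < n the subgroup M_{i+1} is open in M_i and the quotient M_i/M_{i+1} is isomorphic to ℤ/pℤ, and such that Mₙ is topologically isomorphic to ℤ_p^d. Then M₁ is torsion-free if and only if M₁ is topologically isomorphic to ℤ_p^d. -/
/-! The filtration steps have index `p`, so `Mₙ` has index `K = p ^ (n - 1)` in `M₁`; hence `M₁`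
is compact and `x ↦ K • x` maps `M₁` into `Mₙ ≅ ℤ_p^d`. When `M₁` is torsion-free this is a
continuous injection `M₁ → ℤ_p^d`. Its image is compact, hence a closed subgroup, hence a
`ℤ_p`-submodule, and it contains `K • ℤ_p^d`, so it is free of rank `d`. The image is thus
parametrised injectively by two compact groups, `M₁` and `ℤ_p^d`, which are therefore isomorphic
as topological groups. Conversely `ℤ_p^d` is torsion-free. -/

open Function

theorem AddSubgroup.compactSpace_of_isCompact_of_finiteIndex {G : Type*} [AddGroup G]
    [TopologicalSpace G] [ContinuousAdd G] (H : AddSubgroup G) [H.FiniteIndex]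
    (hH : IsCompact (H : Set G)) : CompactSpace G := by
  rw [← isCompact_univ_iff, QuotientAddGroup.univ_eq_iUnion_vadd H]
  exact isCompact_iUnion fun q => hH.vadd _

theorem AddSubgroup.relIndex_eq_of_addEquiv_zmod {G : Type*} [AddCommGroup G]
    {H K : AddSubgroup G} {p : ℕ} [NeZero p] (e : K ⧸ H.addSubgroupOf K ≃+ ZMod p) :
    H.relIndex K = p :=
  (Nat.card_congr e.toEquiv).trans (Nat.card_zmod p)

theorem AddSubgroup.index_eq_pow_of_relIndex_eq {G : Type*} [AddGroup G] {M : ℕ → AddSubgroup G}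
    {p n : ℕ} (hM1 : M 1 = ⊤) (hchain : ∀ i, 1 ≤ i → i < n → M (i + 1) ≤ M i)
    (hrel : ∀ i, 1 ≤ i → i < n → (M (i + 1)).relIndex (M i) = p) {i : ℕ} (hi : 1 ≤ i)
    (hin : i ≤ n) : (M i).index = p ^ (i - 1) := by
  induction i, hi using Nat.le_induction with
  | base => simp [hM1]
  | succ i hi ih =>
    rw [← AddSubgroup.relIndex_mul_index (hchain i hi hin), hrel i hi hin,
      ih (Nat.le_of_succ_le hin), Nat.add_sub_cancel, ← pow_succ', Nat.sub_add_cancel hi]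

section PadicInt

variable {p : ℕ} [Fact p.Prime] {V : Type*} [AddCommGroup V] [TopologicalSpace V]
  [Module ℤ_[p] V] [ContinuousSMul ℤ_[p] V]

/-- `ℕ` is dense in `ℤ_[p]`. -/
theorem AddSubgroup.smul_mem_of_isClosed (H : AddSubgroup V) (hH : IsClosed (H : Set V))
    (c : ℤ_[p]) {y : V} (hy : y ∈ H) : c • y ∈ H := by
  have hclosed : IsClosed {c : ℤ_[p] | c • y ∈ H} :=
    hH.preimage (continuous_id.smul continuous_const)
  have hnat : Set.range (Nat.cast : ℕ → ℤ_[p]) ⊆ {c : ℤ_[p] | c • y ∈ H} := by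
    rintro _ ⟨m, rfl⟩
    simpa only [Set.mem_ofPred_eq, Nat.cast_smul_eq_nsmul] using H.nsmul_mem hy m
  exact closure_minimal hnat hclosed
    ((PadicInt.denseRange_natCast (p := p)).closure_eq ▸ Set.mem_univ c)

def AddSubgroup.toPadicIntSubmodule (H : AddSubgroup V) (hH : IsClosed (H : Set V)) :
    Submodule ℤ_[p] V :=
  { H with smul_mem' := fun c _ hy => H.smul_mem_of_isClosed hH c hy }

end PadicInt

theorem Submodule.nonempty_linearEquiv_pi_of_smul_mem {R ι : Type*} [CommRing R] [IsDomain R]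
    [IsPrincipalIdealRing R] [Fintype ι] (L : Submodule R (ι → R)) {r : R} (hr : r ≠ 0)
    (hL : ∀ y, r • y ∈ L) : Nonempty (L ≃ₗ[R] (ι → R)) := by
  have hinj : Injective ((r • LinearMap.id : (ι → R) →ₗ[R] (ι → R)).codRestrict L hL) :=
    fun y z h => smul_right_injective (ι → R) hr (congrArg Subtype.val h)
  refine ⟨LinearEquiv.ofFinrankEq _ _ (le_antisymm L.finrank_le ?_)⟩
  exact LinearMap.finrank_le_finrank_of_injective hinj

theorem exists_continuous_addEquiv_of_range_eq {X Y Z : Type*} [AddGroup X] [AddGroup Y]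
    [AddGroup Z] [TopologicalSpace X] [TopologicalSpace Y] [TopologicalSpace Z] [CompactSpace X]
    [CompactSpace Y] [T2Space Z] {f : X →+ Z} {g : Y →+ Z} (hf : Continuous f)
    (hg : Continuous g) (hfi : Injective f) (hgi : Injective g) (hrange : f.range = g.range) :
    ∃ e : X ≃+ Y, Continuous e ∧ Continuous e.symm := by
  let e : X ≃+ Y := (AddMonoidHom.ofInjective hfi).trans
    ((AddEquiv.addSubgroupCongr hrange).trans (AddMonoidHom.ofInjective hgi).symm)
  have hge : ∀ x, g (e x) = f x := fun x => by
    simp [e, AddMonoidHom.apply_ofInjective_symm, AddMonoidHom.ofInjective_apply]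
  have hfe : ∀ y, f (e.symm y) = g y := fun y => by
    rw [← hge, e.apply_symm_apply]
  refine ⟨e, ?_, ?_⟩
  · exact (hg.isClosedEmbedding hgi).isEmbedding.continuous_iff.2 (by simpa [comp_def, hge])
  · exact (hf.isClosedEmbedding hfi).isEmbedding.continuous_iff.2 (by simpa [comp_def, hfe])

theorem PadicInt.exists_continuous_addEquiv_pi_of_smul_mem_range {p : ℕ} [Fact p.Prime]
    {ι X : Type*} [Fintype ι] [AddGroup X] [TopologicalSpace X] [CompactSpace X]
    {f : X →+ (ι → ℤ_[p])} (hf : Continuous f) (hfi : Injective f) {r : ℤ_[p]} (hr : r ≠ 0)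
    (hrange : ∀ y, r • y ∈ f.range) :
    ∃ e : X ≃+ (ι → ℤ_[p]), Continuous e ∧ Continuous e.symm := by
  have hclosed : IsClosed (f.range : Set (ι → ℤ_[p])) := by
    rw [AddMonoidHom.coe_range]
    exact (isCompact_range hf).isClosed
  let L := f.range.toPadicIntSubmodule (p := p) hclosed
  obtain ⟨g⟩ := L.nonempty_linearEquiv_pi_of_smul_mem hr hrange
  let ψ : (ι → ℤ_[p]) →ₗ[ℤ_[p]] (ι → ℤ_[p]) := L.subtype ∘ₗ g.symm.toLinearMap
  have hψ : f.range = ψ.toAddMonoidHom.range := AddSubgroup.ext fun y =>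
    ⟨fun hy => ⟨g ⟨y, hy⟩, by simp [ψ]⟩, by rintro ⟨z, rfl⟩; exact (g.symm z).2⟩
  exact exists_continuous_addEquiv_of_range_eq hf ψ.continuous_on_pi hfi
    (Subtype.val_injective.comp g.symm.injective) hψ

theorem torsionFree_iff_topIso_of_filtration_general (p : ℕ) [Fact p.Prime] (d n : ℕ)
    (hn : 1 ≤ n)
    (X : Type) [AddCommGroup X] [TopologicalSpace X] [IsTopologicalAddGroup X]
    (M : ℕ → AddSubgroup X) (hM1 : M 1 = ⊤)
    (hchain : ∀ i, 1 ≤ i → i < n → M (i + 1) ≤ M i)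
    (hquot : ∀ i, 1 ≤ i → i < n →
      Nonempty ((M i ⧸ (M (i + 1)).addSubgroupOf (M i)) ≃+ ZMod p))
    (hlast : ∃ e : M n ≃+ (Fin d → ℤ_[p]), Continuous e ∧ Continuous e.symm) :
    (∀ (x : X) (k : ℕ), 0 < k → k • x = 0 → x = 0) ↔
      ∃ e : X ≃+ (Fin d → ℤ_[p]), Continuous e ∧ Continuous e.symm := by
  refine ⟨fun htf => ?_, fun ⟨e, _, _⟩ x k hk hkx => ?_⟩
  · obtain ⟨e, he, he'⟩ := hlast
    have hindex : (M n).index = p ^ (n - 1) := AddSubgroup.index_eq_pow_of_relIndex_eq hM1 hchain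
      (fun i hi hin => (hquot i hi hin).elim AddSubgroup.relIndex_eq_of_addEquiv_zmod) hn le_rfl
    set K := (M n).index
    have hK : K ≠ 0 := hindex ▸ pow_ne_zero _ (Fact.out : p.Prime).ne_zero
    have : (M n).FiniteIndex := ⟨hK⟩
    have : CompactSpace X := (M n).compactSpace_of_isCompact_of_finiteIndex
      (isCompact_iff_compactSpace.2 (Homeomorph.mk e.toEquiv he he').symm.compactSpace)
    let f : X →+ (Fin d → ℤ_[p]) :=
      e.toAddMonoidHom.comp ((nsmulAddMonoidHom K).codRestrict (M n) (M n).nsmul_index_mem)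
    have hf : Continuous f := he.comp ((continuous_id.nsmul K).subtype_mk _)
    have hfi : Injective f := (injective_iff_map_eq_zero f).2 fun x hx =>
      htf x K (Nat.pos_of_ne_zero hK) (congrArg Subtype.val (e.map_eq_zero_iff.1 hx))
    refine PadicInt.exists_continuous_addEquiv_pi_of_smul_mem_range hf hfi
      (Nat.cast_ne_zero.2 hK) fun y => ⟨e.symm y, ?_⟩
    change e (K • e.symm y) = _
    rw [map_nsmul, e.apply_symm_apply, Nat.cast_smul_eq_nsmul]
  · have := Injective.isAddTorsionFree (e : X →+ (Fin d → ℤ_[p])) e.injective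
    exact (nsmul_eq_zero_iff_right hk.ne').1 hkx

/-- If a topological abelian group `M₁` admits a finite filtration
`M₁ ⊇ M₂ ⊇ ⋯ ⊇ Mₙ` by subgroups (each with the subspace topology), in which each
`M_{i+1}` is open in `M_i` with quotient `M_i/M_{i+1}` isomorphic to `ℤ/pℤ`, and in which
`Mₙ` is topologically isomorphic to `ℤ_p^d`, then `M₁` is torsion-free if and only if
`M₁` is topologically isomorphic to `ℤ_p^d`. -/
theorem torsionFree_iff_topIso_of_filtration (p : ℕ) [Fact p.Prime] (d n : ℕ)
    (hd : 1 ≤ d) (hn : 1 ≤ n)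
    (X : Type) [AddCommGroup X] [TopologicalSpace X] [IsTopologicalAddGroup X]
    (M : ℕ → AddSubgroup X) (hM1 : M 1 = ⊤)
    (hchain : ∀ i, 1 ≤ i → i < n → M (i + 1) ≤ M i)
    (hopen : ∀ i, 1 ≤ i → i < n →
      IsOpen {x : M i | (x : X) ∈ M (i + 1)})
    (hquot : ∀ i, 1 ≤ i → i < n →
      Nonempty ((M i ⧸ (M (i + 1)).addSubgroupOf (M i)) ≃+ ZMod p))
    (hlast : ∃ e : M n ≃+ (Fin d → ℤ_[p]), Continuous e ∧ Continuous e.symm) :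
    (∀ (x : X) (k : ℕ), 0 < k → k • x = 0 → x = 0) ↔
      ∃ e : X ≃+ (Fin d → ℤ_[p]), Continuous e ∧ Continuous e.symm :=
  torsionFree_iff_topIso_of_filtration_general p d n hn X M hM1 hchain hquot hlast
end

section
/- Let p be a prime and let K be a finite field extension of ℚ_p of degree d, equipped with its canonical topology as a finite-dimensional ℚ_p-vector space. Let 𝒪_K denote the integral closure of ℤ_p in K, with the subspace topology. Then the additive topological group 𝒪_K is topologically isomorphic to ℤ_p^d. -/
/-!
Since `ℤ_p` is a PID, `𝒪_K` is a free `ℤ_p`-module of rank `d`, and a `ℤ_p`-basis of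
`𝒪_K` is also a `ℚ_p`-basis of `K`. The coordinate map of that basis is a linear isomorphism
`K ≃ ℚ_p^d`, hence a homeomorphism (finite dimension), and it carries `𝒪_K` onto `ℤ_p^d`;
both sides carry the subspace topology, so the restriction is a homeomorphism.
-/

open Module Topology

theorem Equiv.continuous_and_continuous_symm_of_isInducing_comm {X Y X' Y' : Type*}
    [TopologicalSpace X] [TopologicalSpace Y] [TopologicalSpace X'] [TopologicalSpace Y']
    (e : X ≃ Y) (F : X' ≃ₜ Y') {i : X → X'} {j : Y → Y'} (hi : IsInducing i)
    (hj : IsInducing j) (h : ∀ x, j (e x) = F (i x)) : Continuous e ∧ Continuous e.symm := by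
  refine ⟨hj.continuous_iff.2 ?_, hi.continuous_iff.2 ?_⟩
  · simpa only [Function.comp_def, h] using F.continuous.comp hi.continuous
  · have h' : ∀ y, i (e.symm y) = F.symm (j y) := fun y => by
      rw [F.eq_symm_apply, ← h, e.apply_symm_apply]
    simpa only [Function.comp_def, h'] using F.symm.continuous.comp hj.continuous

theorem IsIntegralClosure.exists_basis_repr_algebraMap (A K L C : Type*) [CommRing A]
    [IsDomain A] [IsPrincipalIdealRing A] [Field K] [Algebra A K] [IsFractionRing A K]
    [Field L] [Algebra K L] [FiniteDimensional K L] [Algebra.IsSeparable K L]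
    [Algebra A L] [IsScalarTower A K L] [CommRing C] [Algebra C L] [IsIntegralClosure C A L]
    [Algebra A C] [IsScalarTower A C L] :
    ∃ (b : Basis (Fin (finrank K L)) A C) (bL : Basis (Fin (finrank K L)) K L),
      ∀ x i, bL.repr (algebraMap C L x) i = algebraMap A K (b.repr x i) := by
  have : IsTorsionFree A L := .trans_faithfulSMul A K L
  have := IsIntegralClosure.module_free A K L C
  have := IsIntegralClosure.isNoetherian A K L C
  have := IsIntegralClosure.isLocalization A K L C
  let b := (Free.chooseBasis A C).reindex
    (Fintype.equivFinOfCardEq ((finrank_eq_card_chooseBasisIndex A C).symm.trans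
      (IsIntegralClosure.rank A K L C)))
  exact ⟨b, b.localizationLocalization K (nonZeroDivisors A) L,
    b.localizationLocalization_repr_algebraMap K (nonZeroDivisors A) L⟩

/-- Let `K` be a finite extension of `ℚ_p` of degree `d`, equipped with its canonical
topology as a finite-dimensional `ℚ_p`-vector space (any Hausdorff vector space topology;
these all coincide). Then the ring of integers `𝒪_K`, i.e. the integral closure of `ℤ_p`
in `K`, with the subspace topology, is topologically isomorphic as an additive topological
group to `ℤ_p^d`. -/
theorem ringOfIntegers_topIso_Zp_pow (p : ℕ) [Fact p.Prime] (K : Type) [Field K]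
    [TopologicalSpace K] [IsTopologicalAddGroup K] [T2Space K]
    [Algebra ℚ_[p] K] [ContinuousSMul ℚ_[p] K]
    [Algebra ℤ_[p] K] [IsScalarTower ℤ_[p] ℚ_[p] K]
    [FiniteDimensional ℚ_[p] K] (d : ℕ) (hd : d = Module.finrank ℚ_[p] K) :
    ∃ e : integralClosure ℤ_[p] K ≃+ (Fin d → ℤ_[p]),
      Continuous e ∧ Continuous e.symm := by
  subst hd
  obtain ⟨b, bK, hrepr⟩ :=
    IsIntegralClosure.exists_basis_repr_algebraMap ℤ_[p] ℚ_[p] K (integralClosure ℤ_[p] K)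
  let F : K ≃ₜ (Fin (finrank ℚ_[p] K) → ℚ_[p]) :=
    bK.equivFun.toContinuousLinearEquiv.toHomeomorph
  exact ⟨b.equivFun.toAddEquiv,
    b.equivFun.toEquiv.continuous_and_continuous_symm_of_isInducing_comm F .subtypeVal
      (.piMap fun _ => .subtypeVal) fun x => funext fun i => (hrepr x i).symm⟩
end

section
/- Let p be a prime and let W be a Weierstrass curve over ℤ_p, given by y² + a₁xy + a₃y = x³ + a₂x² + a₄x + a₆ with aᵢ ∈ ℤ_p, with nonzero discriminant Δ, and with additive reduction, i.e. p ∣ Δ and p ∣ c₄. Then there exists a variable change over ℤ_p, given by (u, r, s, t) with u ∈ ℤ_p^× and r, s, t ∈ ℤ_p (acting by x = u²x' + r, y = u³y' + u²sx' + t), such that the transformed Weierstrass curve has all of its coefficients a₁', a₂', a₃', a₄', a₆' in pℤ_p. -/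
/-!
Reduce modulo `p`: the reduction is a Weierstrass curve over the perfect field `𝔽_p` with
`c₄ = Δ = 0`, and over a perfect field every such curve is isomorphic to the cusp `y² = x³`.
Away from characteristics 2 and 3 the short normal form `y² = x³ + a₄x + a₆` has
`c₄ = -48 a₄` and `Δ = -16 (4 a₄³ + 27 a₆²)`. In characteristic 3, `c₄ = b₂²` forces `b₂ = 0`,
which again gives a short normal form, now with `Δ = -a₄³`, and a translation by a cube root
removes `a₆`. In characteristic 2, `c₄ = a₁⁴` and then `Δ = a₃⁴`, and the remaining
coefficients are removed using square roots. Since `ℤ_p → 𝔽_p` is a surjective local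
homomorphism, the change of variables lifts to `ℤ_p`.
-/

open WeierstrassCurve PadicInt

namespace WeierstrassCurve

variable {R : Type*} [CommRing R]

def cusp (R : Type*) [CommRing R] : WeierstrassCurve R := ⟨0, 0, 0, 0, 0⟩

lemma VariableChange.exists_map_eq {S : Type*} [CommRing S] (φ : R →+* S) [IsLocalHom φ]
    (hφ : Function.Surjective φ) (C : VariableChange S) :
    ∃ C' : VariableChange R, C'.map φ = C := by
  obtain ⟨u, hu⟩ := IsLocalRing.surjective_units_map_of_local_ringHom φ hφ inferInstance C.u
  obtain ⟨r, hr⟩ := hφ C.r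
  obtain ⟨s, hs⟩ := hφ C.s
  obtain ⟨t, ht⟩ := hφ C.t
  exact ⟨⟨u, r, s, t⟩, VariableChange.ext hu hr hs ht⟩

lemma exists_variableChange_smul_eq_cusp_of_isShortNF_of_charThree [IsReduced R] [CharP R 3]
    [PerfectRing R 3] (W : WeierstrassCurve R) [W.IsShortNF] (hΔ : W.Δ = 0) :
    ∃ C : VariableChange R, C • W = cusp R := by
  have ha₄ : W.a₄ = 0 := by
    rw [Δ_of_isShortNF_of_char_three, neg_eq_zero] at hΔ
    exact IsReduced.eq_zero _ ⟨3, hΔ⟩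
  obtain ⟨r, hr⟩ := surjective_frobenius R 3 (-W.a₆)
  rw [frobenius_def] at hr
  refine ⟨⟨1, r, 0, 0⟩, ?_⟩
  ext <;> simp only [variableChange_a₁, variableChange_a₂, variableChange_a₃, variableChange_a₄,
    variableChange_a₆, inv_one, Units.val_one, one_pow, one_mul, a₁_of_isShortNF,
    a₂_of_isShortNF, a₃_of_isShortNF, ha₄, cusp]
  · ring
  · linear_combination r * CharP.cast_eq_zero R 3
  · ring
  · linear_combination r ^ 2 * CharP.cast_eq_zero R 3
  · linear_combination hr

lemma exists_variableChange_smul_eq_cusp_of_charThree [IsReduced R] [CharP R 3] [PerfectRing R 3]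
    (W : WeierstrassCurve R) (hc₄ : W.c₄ = 0) (hΔ : W.Δ = 0) :
    ∃ C : VariableChange R, C • W = cusp R := by
  have hb₂ : W.b₂ = 0 := by
    rw [c₄] at hc₄
    exact IsReduced.eq_zero _ ⟨2, by linear_combination hc₄ + 8 * W.b₄ * CharP.cast_eq_zero R 3⟩
  have := W.toShortNFOfCharThree_spec hb₂
  obtain ⟨C, hC⟩ :=
    (W.toShortNFOfCharThree • W).exists_variableChange_smul_eq_cusp_of_isShortNF_of_charThree
      (by rw [variableChange_Δ, hΔ, mul_zero])
  exact ⟨C * W.toShortNFOfCharThree, by rw [mul_smul, hC]⟩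

lemma exists_variableChange_smul_eq_cusp_of_charTwo [IsReduced R] [CharP R 2] [PerfectRing R 2]
    (W : WeierstrassCurve R) (hc₄ : W.c₄ = 0) (hΔ : W.Δ = 0) :
    ∃ C : VariableChange R, C • W = cusp R := by
  have ha₁ : W.a₁ = 0 := by
    rw [c₄, b₂, b₄] at hc₄
    refine IsReduced.eq_zero _ ⟨4, ?_⟩
    linear_combination hc₄ -
      (4 * W.a₁ ^ 2 * W.a₂ + 8 * W.a₂ ^ 2 - 24 * W.a₄ - 12 * W.a₁ * W.a₃) * CharP.cast_eq_zero R 2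
  have ha₃ : W.a₃ = 0 := by
    -- `Δ = a₃⁴` in characteristic 2 once `a₁ = 0`
    rw [Δ, b₂, b₄, b₆, b₈, ha₁] at hΔ
    refine IsReduced.eq_zero _ ⟨4, ?_⟩
    linear_combination -hΔ + (-13 * W.a₃ ^ 4 - 108 * W.a₃ ^ 2 * W.a₆ - 216 * W.a₆ ^ 2
      - 8 * W.a₂ ^ 2 * (4 * W.a₂ * W.a₆ + W.a₂ * W.a₃ ^ 2 - W.a₄ ^ 2) - 32 * W.a₄ ^ 3
      + 36 * W.a₂ * W.a₄ * (W.a₃ ^ 2 + 4 * W.a₆)) * CharP.cast_eq_zero R 2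
  -- with `a₁ = a₃ = 0`, these make `a₄`, `a₂` and `a₆` vanish, in this order
  obtain ⟨r, hr⟩ := surjective_frobenius R 2 W.a₄
  obtain ⟨s, hs⟩ := surjective_frobenius R 2 (W.a₂ + r)
  obtain ⟨t, ht⟩ := surjective_frobenius R 2 (W.a₆ + r * W.a₄ + r ^ 2 * W.a₂ + r ^ 3)
  rw [frobenius_def] at hr hs ht
  refine ⟨⟨1, r, s, t⟩, ?_⟩
  ext <;> simp only [variableChange_a₁, variableChange_a₂, variableChange_a₃, variableChange_a₄,
    variableChange_a₆, inv_one, Units.val_one, one_pow, one_mul, ha₁, ha₃, cusp]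
  · linear_combination s * CharP.cast_eq_zero R 2
  · linear_combination -hs + r * CharP.cast_eq_zero R 2
  · linear_combination t * CharP.cast_eq_zero R 2
  · linear_combination 3 * hr + (2 * W.a₄ + r * W.a₂ - s * t) * CharP.cast_eq_zero R 2
  · linear_combination -ht

lemma eq_cusp_of_isShortNF [IsReduced R] [Invertible (2 : R)] [Invertible (3 : R)]
    (W : WeierstrassCurve R) [W.IsShortNF] (hc₄ : W.c₄ = 0) (hΔ : W.Δ = 0) : W = cusp R := by
  have h2 : IsUnit (2 : R) := isUnit_of_invertible 2
  have h3 : IsUnit (3 : R) := isUnit_of_invertible 3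
  have ha₄ : W.a₄ = 0 := by
    rw [c₄_of_isShortNF, show (-48 : R) = -(2 ^ 4 * 3) by norm_num] at hc₄
    exact ((h2.pow 4).mul h3).neg.mul_right_eq_zero.mp hc₄
  have ha₆ : W.a₆ = 0 := by
    rw [Δ_of_isShortNF, ha₄] at hΔ
    have h : -(2 ^ 4 * 3 ^ 3) * W.a₆ ^ 2 = 0 := by linear_combination hΔ
    exact IsReduced.eq_zero _ ⟨2, ((h2.pow 4).mul (h3.pow 3)).neg.mul_right_eq_zero.mp h⟩
  ext
  · exact W.a₁_of_isShortNF
  · exact W.a₂_of_isShortNF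
  · exact W.a₃_of_isShortNF
  · exact ha₄
  · exact ha₆

theorem exists_variableChange_smul_eq_cusp {F : Type*} [Field F] [PerfectField F]
    (W : WeierstrassCurve F) (hc₄ : W.c₄ = 0) (hΔ : W.Δ = 0) :
    ∃ C : VariableChange F, C • W = cusp F := by
  by_cases h2 : ringChar F = 2
  · have := ringChar.of_eq h2
    exact W.exists_variableChange_smul_eq_cusp_of_charTwo hc₄ hΔ
  by_cases h3 : ringChar F = 3
  · have := ringChar.of_eq h3
    exact W.exists_variableChange_smul_eq_cusp_of_charThree hc₄ hΔ
  have := invertibleOfNonzero (Ring.two_ne_zero h2)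
  have : Invertible (3 : F) := invertibleOfNonzero <| by
    rw [Ne, show (3 : F) = (3 : ℕ) by norm_cast, ringChar.spec, Nat.dvd_prime Nat.prime_three]
    exact not_or.mpr ⟨CharP.ringChar_ne_one, h3⟩
  exact ⟨W.toShortNF, eq_cusp_of_isShortNF _ (by rw [variableChange_c₄, hc₄, mul_zero])
    (by rw [variableChange_Δ, hΔ, mul_zero])⟩

end WeierstrassCurve

lemma PadicInt.p_dvd_iff_toZMod_eq_zero {p : ℕ} [Fact p.Prime] (x : ℤ_[p]) :
    (p : ℤ_[p]) ∣ x ↔ toZMod x = 0 := by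
  rw [← Ideal.mem_span_singleton, ← maximalIdeal_eq_span_p, ← ker_toZMod, RingHom.mem_ker]

theorem exists_variableChange_coeffs_dvd_general (p : ℕ) [Fact p.Prime]
    (W : WeierstrassCurve ℤ_[p])
    (hΔdvd : (p : ℤ_[p]) ∣ W.Δ) (hc₄ : (p : ℤ_[p]) ∣ W.c₄) :
    ∃ C : WeierstrassCurve.VariableChange ℤ_[p],
      (p : ℤ_[p]) ∣ (C • W).a₁ ∧
      (p : ℤ_[p]) ∣ (C • W).a₂ ∧
      (p : ℤ_[p]) ∣ (C • W).a₃ ∧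
      (p : ℤ_[p]) ∣ (C • W).a₄ ∧
      (p : ℤ_[p]) ∣ (C • W).a₆ := by
  rw [p_dvd_iff_toZMod_eq_zero] at hΔdvd hc₄
  obtain ⟨C, hC⟩ := (W.map toZMod).exists_variableChange_smul_eq_cusp
    (by rwa [map_c₄]) (by rwa [map_Δ])
  have hsurj := ZMod.ringHom_surjective (toZMod : ℤ_[p] →+* ZMod p)
  have := IsLocalHom.of_surjective _ hsurj
  obtain ⟨C', rfl⟩ := C.exists_map_eq toZMod hsurj
  rw [map_variableChange] at hC
  simp only [p_dvd_iff_toZMod_eq_zero]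
  exact ⟨C', congrArg a₁ hC, congrArg a₂ hC, congrArg a₃ hC, congrArg a₄ hC, congrArg a₆ hC⟩

/-- If `W` is a Weierstrass curve over `ℤ_p` with nonzero discriminant and additive
reduction (i.e. `p ∣ Δ` and `p ∣ c₄`), then there is a change of variables `(u, r, s, t)`
over `ℤ_p` with `u` a unit such that the transformed Weierstrass curve has all of its
coefficients in `pℤ_p`. -/
theorem exists_variableChange_coeffs_dvd (p : ℕ) [Fact p.Prime]
    (W : WeierstrassCurve ℤ_[p]) (hΔ : W.Δ ≠ 0)
    (hΔdvd : (p : ℤ_[p]) ∣ W.Δ) (hc₄ : (p : ℤ_[p]) ∣ W.c₄) :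
    ∃ C : WeierstrassCurve.VariableChange ℤ_[p],
      (p : ℤ_[p]) ∣ (C • W).a₁ ∧
      (p : ℤ_[p]) ∣ (C • W).a₂ ∧
      (p : ℤ_[p]) ∣ (C • W).a₃ ∧
      (p : ℤ_[p]) ∣ (C • W).a₄ ∧
      (p : ℤ_[p]) ∣ (C • W).a₆ :=
  exists_variableChange_coeffs_dvd_general p W hΔdvd hc₄
end

section
/- Consider the Weierstrass curve W : y² + 7xy − 28y = x³ + 7x − 35 over ℚ (i.e. a₁ = 7, a₂ = 0, a₃ = −28, a₄ = 7, a₆ = −35). Then: the discriminant Δ of W is nonzero; 7 ∣ Δ and 7 ∣ c₄ (so W has additive reduction at 7); the point P = (2,1) lies on W and has exact order 7 in the group of points W(ℚ); and, regarding P as a point of W over ℚ₇, the reduction of P modulo 7 is a nonsingular point of the reduction of W modulo 7 (so P lies in E₀(ℚ₇)). -/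
/-!
Doubling and adding on `W` gives `2P = (-10, 85)`, `3P = (8, 13)` and `4P = (8, -41) = -3P`,
so `7P = 0` and, `7` being prime, `P ≠ 0` has order exactly `7`. Modulo `7` every coefficient
vanishes and the curve reduces to the cuspidal cubic `y² = x³`, whose only singular point is
`(0, 0)`; the reduction `(2, 1)` of `P` is therefore nonsingular.
-/

open WeierstrassCurve

/-- The Weierstrass curve `y² + 7xy + (-28)y = x³ + 0x² + 7x + (-35)` over `ℤ`. -/
def Wint : WeierstrassCurve ℤ := ⟨7, 0, (-28), 7, (-35)⟩

/-- The same Weierstrass curve, base changed to `ℚ`. -/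
def Wrat : WeierstrassCurve ℚ := Wint.map (Int.castRingHom ℚ)

/-- The reduction of the curve modulo `7`. -/
def Wbar : WeierstrassCurve (ZMod 7) := Wint.map (Int.castRingHom (ZMod 7))

namespace WeierstrassCurve.Affine.Point

variable {F : Type*} [Field F] [DecidableEq F] {W : Affine F}

lemma some_add_some_eq {x₁ y₁ x₂ y₂ x₃ y₃ : F} {h₁ : W.Nonsingular x₁ y₁}
    {h₂ : W.Nonsingular x₂ y₂} (h₃ : W.Nonsingular x₃ y₃) (hxy : ¬(x₁ = x₂ ∧ y₁ = W.negY x₂ y₂))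
    (hx₃ : W.addX x₁ x₂ (W.slope x₁ x₂ y₁ y₂) = x₃)
    (hy₃ : W.addY x₁ x₂ y₁ (W.slope x₁ x₂ y₁ y₂) = y₃) :
    some _ _ h₁ + some _ _ h₂ = some _ _ h₃ := by
  subst hx₃ hy₃
  exact add_some hxy

end WeierstrassCurve.Affine.Point

lemma Wint_Δ : Wint.Δ = -(2 ^ 7 * 3 ^ 7 * 7 ^ 2) := by decide

lemma Wint_c₄ : Wint.c₄ = 7 * 967 := by decide

lemma Wrat_eq : Wrat = ⟨7, 0, -28, 7, -35⟩ := by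
  ext <;> norm_num [Wrat, Wint]

lemma Wbar_eq : Wbar = ⟨0, 0, 0, 0, 0⟩ := by
  ext <;> decide

lemma Wrat_nonsingular_iff (x y : ℚ) : Wrat.toAffine.Nonsingular x y ↔
    y ^ 2 + 7 * x * y - 28 * y = x ^ 3 + 7 * x - 35 ∧
      (7 * y ≠ 3 * x ^ 2 + 7 ∨ 2 * y + 7 * x ≠ 28) := by
  rw [Affine.nonsingular_iff, Affine.equation_iff, Wrat_eq]
  refine and_congr ⟨fun h ↦ by linear_combination h, fun h ↦ by linear_combination h⟩
    (or_congr (by norm_num) (not_congr ⟨fun h ↦ by linarith, fun h ↦ by linarith⟩))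

namespace Wrat

open Affine.Point

attribute [local simp] Affine.negY Affine.slope Affine.addX Affine.addY Affine.negAddY

def P : Wrat.toAffine.Point := some 2 1 ((Wrat_nonsingular_iff _ _).2 (by norm_num))

def twoP : Wrat.toAffine.Point := some (-10) 85 ((Wrat_nonsingular_iff _ _).2 (by norm_num))

def threeP : Wrat.toAffine.Point := some 8 13 ((Wrat_nonsingular_iff _ _).2 (by norm_num))

def fourP : Wrat.toAffine.Point := some 8 (-41) ((Wrat_nonsingular_iff _ _).2 (by norm_num))

lemma P_add_P : P + P = twoP :=
  some_add_some_eq _ (by norm_num [Wrat_eq]) (by norm_num [Wrat_eq]) (by norm_num [Wrat_eq])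

lemma P_add_twoP : P + twoP = threeP :=
  some_add_some_eq _ (by norm_num [Wrat_eq]) (by norm_num [Wrat_eq]) (by norm_num [Wrat_eq])

lemma twoP_add_twoP : twoP + twoP = fourP :=
  some_add_some_eq _ (by norm_num [Wrat_eq]) (by norm_num [Wrat_eq]) (by norm_num [Wrat_eq])

lemma threeP_add_fourP : threeP + fourP = 0 :=
  add_of_Y_eq rfl (by norm_num [Wrat_eq])

lemma addOrderOf_P : addOrderOf P = 7 := by
  have : Fact (Nat.Prime 7) := ⟨by norm_num⟩
  refine addOrderOf_eq_prime ?_ (some_ne_zero _)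
  calc 7 • P = P + (P + P) + ((P + P) + (P + P)) := by abel
    _ = 0 := by rw [P_add_P, P_add_twoP, twoP_add_twoP, threeP_add_fourP]

end Wrat

/-- The curve has nonzero discriminant, additive reduction at `7` (i.e. `7 ∣ Δ` and
`7 ∣ c₄`), the point `P = (2, 1)` lies on it and has exact order `7` in the group
of rational points, and the reduction of `P` modulo `7` is a nonsingular point of the
reduction of the curve modulo `7` (so `P` lies in `E₀(ℚ_7)`). -/
theorem example_curve_p7 :
    Wint.Δ ≠ 0 ∧ (7 : ℤ) ∣ Wint.Δ ∧ (7 : ℤ) ∣ Wint.c₄ ∧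
    (∃ h : Wrat.toAffine.Nonsingular 2 1,
      addOrderOf (WeierstrassCurve.Affine.Point.some _ _ h) = 7) ∧
    Wbar.toAffine.Nonsingular 2 1 := by
  refine ⟨by rw [Wint_Δ]; norm_num, ⟨-(2 ^ 7 * 3 ^ 7 * 7), by rw [Wint_Δ]; ring⟩,
    ⟨967, Wint_c₄⟩, ⟨_, Wrat.addOrderOf_P⟩, ?_⟩
  rw [Wbar_eq, Affine.nonsingular_iff, Affine.equation_iff]
  decide
end

section
/- Let p be a prime, d ≥ 1, and let v ∈ ℤ_p^d with v ∉ pℤ_p^d. Let X_v ⊆ ℚ_p^d be the subgroup generated by ℤ_p^d together with the element v/p, equipped with the subspace topology from ℚ_p^d. Then X_v is topologically isomorphic to ℤ_p^d, the subgroup ℤ_p^d ⊆ X_v has index p in X_v, and the quotient X_v/ℤ_p^d is isomorphic to ℤ/pℤ. -/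
/-- The subgroup `ℤ_p^d` of the additive group `ℚ_p^d`: vectors all of whose
coordinates are `p`-adic integers. -/
noncomputable def Zpd (p : ℕ) [Fact p.Prime] (d : ℕ) : AddSubgroup (Fin d → ℚ_[p]) :=
  AddSubgroup.pi Set.univ fun _ => (PadicInt.subring p).toAddSubgroup

/-- For `v ∈ ℤ_p^d`, the subgroup `X_v` of `ℚ_p^d` generated by `ℤ_p^d` and `v/p`. -/
noncomputable def Xv (p : ℕ) [Fact p.Prime] (d : ℕ) (v : Fin d → ℤ_[p]) :
    AddSubgroup (Fin d → ℚ_[p]) :=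
  Zpd p d ⊔ AddSubgroup.zmultiples (fun i => (v i : ℚ_[p]) / p)

/-!
Choose a coordinate `i₀` at which `v` is a unit. The `ℚ_p`-linear automorphism of `ℚ_p^d`
replacing the basis vector `e_{i₀}` by `v/p` carries `ℤ_p^d` onto `X_v`: the image contains
`ℤ_p^d` because `v_{i₀}` is a unit, and it lies in `X_v` because `ℤ_p = ℤ + pℤ_p` gives
`ℤ_p • (v/p) ⊆ ℤ_p^d + ℤ • (v/p)`. Linear maps of a finite-dimensional `ℚ_p`-space are
homeomorphisms, so this is a topological isomorphism. The quotient `X_v/ℤ_p^d` is generated by the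
class of `v/p`, which has order `p` since `p • (v/p) = v ∈ ℤ_p^d` but `v/p ∉ ℤ_p^d`.
-/

open AddSubgroup

section QuotientBySupZMultiples

variable {G : Type*} [AddCommGroup G] {H : AddSubgroup G} {g : G}

theorem AddSubgroup.mem_zmultiples_mk_of_sup_zmultiples
    (x : ↥(H ⊔ zmultiples g) ⧸ H.addSubgroupOf (H ⊔ zmultiples g)) :
    x ∈ zmultiples
      (QuotientAddGroup.mk ⟨g, mem_sup_right (mem_zmultiples g)⟩ : _ ⧸ H.addSubgroupOf _) := by
  obtain ⟨⟨k, hk⟩, rfl⟩ := QuotientAddGroup.mk_surjective x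
  obtain ⟨h, hh, _, ⟨n, rfl⟩, rfl⟩ := mem_sup.mp hk
  refine ⟨n, (QuotientAddGroup.eq_iff_sub_mem.mpr ?_).symm⟩
  simpa [mem_addSubgroupOf] using hh

theorem AddSubgroup.card_quotient_sup_zmultiples {p : ℕ} [Fact p.Prime]
    (hpg : p • g ∈ H) (hg : g ∉ H) :
    Nat.card (↥(H ⊔ zmultiples g) ⧸ H.addSubgroupOf (H ⊔ zmultiples g)) = p := by
  set q : ↥(H ⊔ zmultiples g) ⧸ H.addSubgroupOf (H ⊔ zmultiples g) :=
    QuotientAddGroup.mk ⟨g, mem_sup_right (mem_zmultiples g)⟩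
  have hq : addOrderOf q = p := by
    refine addOrderOf_eq_prime ?_ ?_
    · rw [← QuotientAddGroup.mk_nsmul, QuotientAddGroup.eq_zero_iff, mem_addSubgroupOf]
      exact hpg
    · rwa [Ne, QuotientAddGroup.eq_zero_iff, mem_addSubgroupOf]
  rw [← hq, ← Nat.card_zmultiples, (eq_top_iff' _).mpr mem_zmultiples_mk_of_sup_zmultiples,
    card_top]

end QuotientBySupZMultiples

namespace LinearEquiv

variable {K ι : Type*} [Field K] [DecidableEq ι] (i : ι) (c : ι → K) (hc : c i ≠ 0)

/-- The automorphism of `ι → K` sending the standard basis vector `Pi.single i 1` to `c` and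
fixing the other standard basis vectors. -/
def piReplaceSingle : (ι → K) ≃ₗ[K] (ι → K) where
  toFun x := Function.update x i 0 + x i • c
  invFun y := y - (y i / c i) • (c - Pi.single i 1)
  map_add' x y := by
    ext j
    rcases eq_or_ne j i with rfl | h <;> simp [*] <;> ring
  map_smul' a x := by
    ext j
    rcases eq_or_ne j i with rfl | h <;> simp [*] <;> ring
  left_inv x := by
    ext j
    rcases eq_or_ne j i with rfl | h
    · simp only [Pi.add_apply, Pi.sub_apply, Pi.smul_apply, smul_eq_mul, Function.update_self,
        Pi.single_eq_same, zero_add]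
      field_simp
      ring
    · simp only [Pi.add_apply, Pi.sub_apply, Pi.smul_apply, smul_eq_mul, Function.update_self,
        Function.update_of_ne h, Pi.single_eq_of_ne h, zero_add, sub_zero]
      field_simp
      ring
  right_inv y := by
    ext j
    rcases eq_or_ne j i with rfl | h
    · simp only [Pi.add_apply, Pi.sub_apply, Pi.smul_apply, smul_eq_mul, Function.update_self,
        Pi.single_eq_same, zero_add]
      field_simp
      ring
    · simp only [Pi.add_apply, Pi.sub_apply, Pi.smul_apply, smul_eq_mul, Function.update_of_ne h,
        Pi.single_eq_of_ne h, Pi.single_eq_same, sub_zero]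
      field_simp
      ring

theorem piReplaceSingle_apply (x : ι → K) :
    piReplaceSingle i c hc x = Function.update x i 0 + x i • c := rfl

theorem piReplaceSingle_symm_apply (y : ι → K) :
    (piReplaceSingle i c hc).symm y = y - (y i / c i) • (c - Pi.single i 1) := rfl

theorem piReplaceSingle_single : piReplaceSingle i c hc (Pi.single i 1) = c := by
  simp [piReplaceSingle_apply, Pi.single, Function.update_idem]

end LinearEquiv

def ContinuousAddEquiv.restrictAddSubgroup {G G' : Type*} [AddGroup G] [AddGroup G']
    [TopologicalSpace G] [TopologicalSpace G'] (e : G ≃ₜ+ G') {H : AddSubgroup G}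
    {K : AddSubgroup G'} (h : ∀ x, e x ∈ K ↔ x ∈ H) : H ≃ₜ+ K where
  toFun x := ⟨e x, (h x).mpr x.2⟩
  invFun y := ⟨e.symm y, (h _).mp (by simp [y.2])⟩
  left_inv x := by simp
  right_inv y := by simp
  map_add' x y := by ext; simp
  continuous_toFun := (e.continuous.comp continuous_subtype_val).subtype_mk _
  continuous_invFun := (e.symm.continuous.comp continuous_subtype_val).subtype_mk _

section Padic

variable {p : ℕ} [Fact p.Prime] {d : ℕ}

theorem mem_Zpd_iff {x : Fin d → ℚ_[p]} : x ∈ Zpd p d ↔ ∀ i, x i ∈ PadicInt.subring p := by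
  simp [Zpd, AddSubgroup.mem_pi]

noncomputable def zpdEquivPi : Zpd p d ≃ₜ+ (Fin d → ℤ_[p]) where
  toFun x i := ⟨x.1 i, mem_Zpd_iff.mp x.2 i⟩
  invFun z := ⟨fun i => z i, mem_Zpd_iff.mpr fun i => (z i).2⟩
  left_inv _ := rfl
  right_inv _ := rfl
  map_add' _ _ := rfl
  continuous_toFun :=
    continuous_pi fun i => ((continuous_apply i).comp continuous_subtype_val).subtype_mk _
  continuous_invFun :=
    (continuous_pi fun i => continuous_subtype_val.comp (continuous_apply i)).subtype_mk _

theorem single_mem_Zpd (i : Fin d) : Pi.single i 1 ∈ Zpd p d :=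
  mem_Zpd_iff.mpr fun j => by
    rcases eq_or_ne j i with rfl | h
    · simp [one_mem]
    · simp [h, zero_mem]

variable (v : Fin d → ℤ_[p])

theorem smul_mem_Xv (a : ℤ_[p]) : (a : ℚ_[p]) • (fun i => (v i : ℚ_[p]) / p) ∈ Xv p d v := by
  obtain ⟨n, -, hn⟩ := PadicInt.exists_mem_range a
  rw [PadicInt.maximalIdeal_eq_span_p, Ideal.mem_span_singleton'] at hn
  obtain ⟨b, hb⟩ := hn
  have ha : (a : ℚ_[p]) = n + b * p := by
    have := congrArg ((↑) : ℤ_[p] → ℚ_[p]) hb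
    push_cast at this
    linear_combination -this
  have hsplit : (a : ℚ_[p]) • (fun i => (v i : ℚ_[p]) / p)
      = (fun i => ((b * v i : ℤ_[p]) : ℚ_[p])) + n • (fun i => (v i : ℚ_[p]) / p) := by
    ext i
    simp only [Pi.smul_apply, Pi.add_apply, smul_eq_mul, PadicInt.coe_mul]
    rw [nsmul_eq_mul, ha]
    field_simp [NeZero.ne (p : ℚ_[p])]
    ring
  rw [hsplit]
  exact add_mem (mem_sup_left (mem_Zpd_iff.mpr fun i => (b * v i).2))
    (mem_sup_right (nsmul_mem (mem_zmultiples _) n))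

theorem p_nsmul_mem_Zpd : p • (fun i => (v i : ℚ_[p]) / p) ∈ Zpd p d :=
  mem_Zpd_iff.mpr fun i => by
    simpa [nsmul_eq_mul, mul_div_cancel₀ _ (NeZero.ne (p : ℚ_[p]))] using (v i).2

variable {v} {i₀ : Fin d}

theorem div_p_notMem_Zpd (hv : ‖v i₀‖ = 1) : (fun i => (v i : ℚ_[p]) / p) ∉ Zpd p d :=
  fun h => by
    have := (PadicInt.mem_subring_iff p).mp (mem_Zpd_iff.mp h i₀)
    rw [norm_div, ← PadicInt.norm_def, hv, Padic.norm_p, one_div, inv_inv] at this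
    exact (Nat.one_lt_cast.mpr (Fact.out : p.Prime).one_lt).not_ge this

theorem coe_div_p_ne_zero (hv : ‖v i₀‖ = 1) : (v i₀ : ℚ_[p]) / p ≠ 0 := by
  refine div_ne_zero ?_ (NeZero.ne _)
  rw [← norm_ne_zero_iff, ← PadicInt.norm_def, hv]
  exact one_ne_zero

noncomputable def xvBasisChange (hv : ‖v i₀‖ = 1) : (Fin d → ℚ_[p]) ≃ₗ[ℚ_[p]] (Fin d → ℚ_[p]) :=
  LinearEquiv.piReplaceSingle i₀ (fun i => (v i : ℚ_[p]) / p) (coe_div_p_ne_zero hv)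

theorem xvBasisChange_symm_mem_Zpd (hv : ‖v i₀‖ = 1) {y : Fin d → ℚ_[p]} (hy : y ∈ Zpd p d) :
    (xvBasisChange hv).symm y ∈ Zpd p d := by
  have hcoord : ∀ j, (xvBasisChange hv).symm y j
      = y j - y i₀ / v i₀ * (v j - p * (Pi.single i₀ 1 : Fin d → ℚ_[p]) j) := fun j => by
    rw [xvBasisChange, LinearEquiv.piReplaceSingle_symm_apply]
    simp only [Pi.sub_apply, Pi.smul_apply, smul_eq_mul]
    field_simp [NeZero.ne (p : ℚ_[p])]
  have hquot : y i₀ / v i₀ ∈ PadicInt.subring p := by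
    rw [PadicInt.mem_subring_iff, norm_div, ← PadicInt.norm_def, hv, div_one]
    exact mem_Zpd_iff.mp hy i₀
  refine mem_Zpd_iff.mpr fun j => ?_
  rw [hcoord]
  exact sub_mem (mem_Zpd_iff.mp hy j) (mul_mem hquot (sub_mem (v j).2
    (mul_mem (natCast_mem _ p) (mem_Zpd_iff.mp (single_mem_Zpd i₀) j))))

theorem xvBasisChange_mem_Xv_iff (hv : ‖v i₀‖ = 1) (x : Fin d → ℚ_[p]) :
    xvBasisChange hv x ∈ Xv p d v ↔ x ∈ Zpd p d := by
  constructor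
  · intro hx
    have hXv : Xv p d v ≤
        (Zpd p d).comap ((xvBasisChange hv).symm : (Fin d → ℚ_[p]) →+ (Fin d → ℚ_[p])) := by
      refine sup_le (fun y hy => xvBasisChange_symm_mem_Zpd hv hy) (zmultiples_le.mpr ?_)
      show (xvBasisChange hv).symm _ ∈ Zpd p d
      rw [(xvBasisChange hv).symm_apply_eq.mpr (LinearEquiv.piReplaceSingle_single i₀ _ _).symm]
      exact single_mem_Zpd i₀
    simpa using hXv hx
  · intro hx
    rw [xvBasisChange, LinearEquiv.piReplaceSingle_apply]
    refine add_mem (mem_sup_left (mem_Zpd_iff.mpr fun j => ?_))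
      (smul_mem_Xv v ⟨x i₀, mem_Zpd_iff.mp hx i₀⟩)
    rcases eq_or_ne j i₀ with rfl | h
    · simp [zero_mem]
    · simpa [h] using mem_Zpd_iff.mp hx j

end Padic

theorem Xv_topIso_Zpd_general (p : ℕ) [Fact p.Prime] (d : ℕ)
    (v : Fin d → ℤ_[p]) (hv : ¬ ∀ i, (p : ℤ_[p]) ∣ v i) :
    (∃ e : Xv p d v ≃+ (Fin d → ℤ_[p]), Continuous e ∧ Continuous e.symm) ∧
    ((Zpd p d).addSubgroupOf (Xv p d v)).index = p ∧
    Nonempty ((Xv p d v ⧸ (Zpd p d).addSubgroupOf (Xv p d v)) ≃+ ZMod p) := by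
  obtain ⟨i₀, hi₀⟩ := not_forall.mp hv
  have hunit : ‖v i₀‖ = 1 :=
    (PadicInt.norm_le_one _).eq_of_not_lt (mt (PadicInt.norm_lt_one_iff_dvd _).mp hi₀)
  have hcard := card_quotient_sup_zmultiples (p_nsmul_mem_Zpd v) (div_p_notMem_Zpd hunit)
  let e : Xv p d v ≃ₜ+ (Fin d → ℤ_[p]) :=
    ((xvBasisChange hunit).toContinuousLinearEquiv.toContinuousAddEquiv.restrictAddSubgroup
      (xvBasisChange_mem_Xv_iff hunit)).symm.trans zpdEquivPi
  exact ⟨⟨e.toAddEquiv, e.continuous, e.symm.continuous⟩, hcard,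
    ⟨(zmodAddEquivOfGenerator mem_zmultiples_mk_of_sup_zmultiples hcard).symm⟩⟩

/-- If `v ∈ ℤ_p^d` with `v ∉ pℤ_p^d`, then `X_v = ℤ_p^d + ⟨v/p⟩ ⊆ ℚ_p^d`, with the
subspace topology, is topologically isomorphic to `ℤ_p^d`; the subgroup `ℤ_p^d` has
index `p` in `X_v`, and the quotient `X_v/ℤ_p^d` is isomorphic to `ℤ/pℤ`. -/
theorem Xv_topIso_Zpd (p : ℕ) [Fact p.Prime] (d : ℕ) (hd : 1 ≤ d)
    (v : Fin d → ℤ_[p]) (hv : ¬ ∀ i, (p : ℤ_[p]) ∣ v i) :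
    (∃ e : Xv p d v ≃+ (Fin d → ℤ_[p]), Continuous e ∧ Continuous e.symm) ∧
    ((Zpd p d).addSubgroupOf (Xv p d v)).index = p ∧
    Nonempty ((Xv p d v ⧸ (Zpd p d).addSubgroupOf (Xv p d v)) ≃+ ZMod p) :=
  Xv_topIso_Zpd_general p d v hv
end
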